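/- Conversely, on the submanifold defined by the Legendre–Ostrogradsky relations, the system of ODEs { q_l' = q_{l+1} (0 ≤ l ≤ 2k−2), (p^0_A)' = ∂L̂/∂q_0^A, (p^i_A)' = ∂L̂/∂q_i^A − p_A^{i-1} } together with the Euler–Lagrange equation Σ_{i=0}^{k}(−1)^i (d/dt)^i(∂L/∂q_i^A ∘ j^k q_0) = 0 is equivalent to: q_0 solves the Euler–Lagrange equation, q_i = q_0^{(i)}, and p^i are given by the Ostrogradsky momentum formulas p_A^{r-1} = Σ_{i=0}^{k-r}(−1)^i (d/dt)^i(∂L/∂q_{r+i}^A ∘ j^k q_0). -/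

import Mathlib

variable (n k : ℕ)

abbrev Jbig (n k : ℕ) := ℝ × (Fin (2 * k + 1) → Fin n → ℝ)

noncomputable def pd (L : Jbig n k → ℝ) (j : Fin (2 * k + 1)) (A : Fin n)
    (x : Jbig n k) : ℝ :=
  fderiv ℝ L x ((0 : ℝ), Pi.single j (Pi.single A (1 : ℝ)))

/-- Total derivative `d_T` on the extended jet space. -/
noncomputable def dT (f : Jbig n k → ℝ) (x : Jbig n k) : ℝ :=
  fderiv ℝ f x ((1 : ℝ), 0) +
    ∑ i : Fin (2 * k + 1), ∑ A : Fin n,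
      (if h : i.1 + 1 < 2 * k + 1 then x.2 ⟨i.1 + 1, h⟩ A else 0) *
        fderiv ℝ f x ((0 : ℝ), Pi.single i (Pi.single A (1 : ℝ)))

/-- Coordinates of the curve, included into the extended jet space. -/
def iotaC (qc : ℝ → Fin (2 * k) → Fin n → ℝ) (t : ℝ) : Jbig n k :=
  (t, fun i A => if h : i.1 < 2 * k then qc t ⟨i.1, h⟩ A else 0)

/-- The (full) jet prolongation of the base curve `q_0`. -/
noncomputable def jetC (hk : 1 ≤ k) (qc : ℝ → Fin (2 * k) → Fin n → ℝ)
    (t : ℝ) : Jbig n k :=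
  (t, fun i A => iteratedDeriv i.1 (fun s => qc s ⟨0, by omega⟩ A) t)

/-! The total derivative is `d_T f (x) = Df(x)(1, x_1, …, x_{2k}, 0)`, so along the jet
prolongation of `q_0` it is the time derivative of `f ∘ j q_0` as long as `f` does not depend on
the top coordinate `q_{2k}`. Since `∂L/∂q_j` depends on coordinates up to `q_k`, and `d_T` raises
this order by one, `d_T^i (∂L/∂q_j)` along the jet equals `(d/dt)^i (∂L/∂q_j ∘ j q_0)` for
`i < k`. The ODEs `q_l' = q_{l+1}` are equivalent to `q_i = q_0^{(i)}`, on which the coordinate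
curve and the jet prolongation agree below the top slot; hence the Legendre–Ostrogradsky
relations turn into the Ostrogradsky momentum formulas and back. The momentum ODEs then follow
from the telescoping identity
`(Σ_{j<m} (-1)^j G_{a+1+j}^{(j)})' = G_a − Σ_{j≤m} (-1)^j G_{a+j}^{(j)}`,
whose last sum is `p^{a-1}` for `a ≥ 1` and the Euler–Lagrange expression for `a = 0`. -/

open scoped ContDiff

lemma ContDiff.hasDerivAt_iteratedDeriv {F : ℝ → ℝ} (hF : ContDiff ℝ ∞ F) (i : ℕ) (t : ℝ) :
    HasDerivAt (iteratedDeriv i F) (iteratedDeriv (i + 1) F t) t := by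
  rw [iteratedDeriv_succ]
  exact (hF.differentiable_iteratedDeriv i (by exact_mod_cast ENat.natCast_lt_top _)
    t).hasDerivAt

lemma ContDiff.iteratedDeriv {F : ℝ → ℝ} (hF : ContDiff ℝ ∞ F) (i : ℕ) :
    ContDiff ℝ ∞ (iteratedDeriv i F) := by
  rw [iteratedDeriv_eq_iterate]
  exact hF.iterate_deriv i

lemma hasDerivAt_succ_iff_eq_iteratedDeriv {n N : ℕ} (hN : 0 < N) (q : ℝ → Fin N → Fin n → ℝ)
    (hq0 : ∀ A, ContDiff ℝ ∞ fun t => q t ⟨0, hN⟩ A) :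
    (∀ (t : ℝ) (l : ℕ) (h : l + 1 < N) (A : Fin n),
        HasDerivAt (fun s => q s ⟨l, by omega⟩ A) (q t ⟨l + 1, h⟩ A) t) ↔
      ∀ (t : ℝ) (i : ℕ) (h : i < N) (A : Fin n),
        q t ⟨i, h⟩ A = iteratedDeriv i (fun s => q s ⟨0, hN⟩ A) t := by
  constructor
  · intro hq t i
    induction i generalizing t with
    | zero => intro h A; rfl
    | succ i ih =>
      intro h A
      rw [iteratedDeriv_succ, ← funext fun s => ih s (by omega) A]
      exact (hq t i h A).deriv.symm
  · intro hol t l h A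
    rw [funext fun s => hol s l (by omega) A, hol t (l + 1) h A]
    exact (hq0 A).hasDerivAt_iteratedDeriv l t

-- With `G j = ∂L/∂q_j ∘ j q_0`, the momentum `p^{a-1}` is `ostrogradskySum G a (k + 1 - a)` and
-- the Euler–Lagrange expression is `ostrogradskySum G 0 (k + 1)`.
noncomputable def ostrogradskySum (G : ℕ → ℝ → ℝ) (a m : ℕ) (t : ℝ) : ℝ :=
  ∑ j ∈ Finset.range m, (-1) ^ j * iteratedDeriv j (G (a + j)) t

lemma hasDerivAt_ostrogradskySum {G : ℕ → ℝ → ℝ} (hG : ∀ j, ContDiff ℝ ∞ (G j))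
    (a m : ℕ) (t : ℝ) :
    HasDerivAt (ostrogradskySum G (a + 1) m) (G a t - ostrogradskySum G a (m + 1) t) t := by
  have hsum := HasDerivAt.fun_sum (u := Finset.range m) fun j _ =>
    ((hG (a + 1 + j)).hasDerivAt_iteratedDeriv j t).const_mul ((-1 : ℝ) ^ j)
  refine hsum.congr_deriv ?_
  rw [ostrogradskySum, Finset.sum_range_succ']
  simp only [add_zero, pow_zero, one_mul, iteratedDeriv_zero, pow_succ, mul_neg_one, neg_mul,
    Finset.sum_neg_distrib, ← add_assoc, Nat.add_right_comm a 1]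
  ring

lemma hasDerivAt_momenta_of_eq_ostrogradskySum {G : ℕ → ℝ → ℝ} (hG : ∀ j, ContDiff ℝ ∞ (G j))
    {k : ℕ} {p : ℝ → Fin k → ℝ}
    (hp : ∀ t r (hr : r < k), p t ⟨r, hr⟩ = ostrogradskySum G (r + 1) (k - r) t)
    (hEL : ∀ t, ostrogradskySum G 0 (k + 1) t = 0) (t : ℝ) :
    (∀ h : 0 < k, HasDerivAt (fun s => p s ⟨0, h⟩) (G 0 t) t) ∧
      ∀ r (h : r + 1 < k),
        HasDerivAt (fun s => p s ⟨r + 1, h⟩) (G (r + 1) t - p t ⟨r, Nat.lt_of_succ_lt h⟩) t := by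
  constructor
  · intro h
    rw [funext fun s => hp s 0 h]
    simpa [hEL t] using hasDerivAt_ostrogradskySum hG 0 k t
  · intro r h
    rw [funext fun s => hp s (r + 1) h, hp t r, show k - r = k - (r + 1) + 1 by omega]
    exact hasDerivAt_ostrogradskySum hG (r + 1) _ t

section JetSpace

variable {n k : ℕ}

-- `∀ x, f (truncate n k m x) = f x` says that `f` depends only on `t, q_0, …, q_m`.
variable (n k) in
noncomputable def truncate (m : ℕ) : Jbig n k →L[ℝ] Jbig n k :=
  (ContinuousLinearMap.id ℝ ℝ).prodMap
    (ContinuousLinearMap.pi fun i : Fin (2 * k + 1) =>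
      if i.1 ≤ m then ContinuousLinearMap.proj i else 0)

lemma truncate_apply (m : ℕ) (x : Jbig n k) :
    truncate n k m x = (x.1, fun i => if i.1 ≤ m then x.2 i else 0) := by
  ext i A <;> simp [truncate, apply_ite (fun T : _ →L[ℝ] (Fin n → ℝ) => T x.2)]

lemma truncate_truncate {m m' : ℕ} (h : m ≤ m') (x : Jbig n k) :
    truncate n k m (truncate n k m' x) = truncate n k m x := by
  ext i A <;> simp only [truncate_apply]
  split_ifs <;> first | rfl | omega

lemma fderiv_eq_comp_truncate {f : Jbig n k → ℝ} (hf : Differentiable ℝ f) {m : ℕ}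
    (hd : ∀ x, f (truncate n k m x) = f x) (x : Jbig n k) :
    fderiv ℝ f x = (fderiv ℝ f (truncate n k m x)).comp (truncate n k m) := by
  conv_lhs => rw [← funext hd]
  exact ((hf _).hasFDerivAt.comp x (truncate n k m).hasFDerivAt).fderiv

lemma pd_truncate {L : Jbig n k → ℝ} (hL : Differentiable ℝ L) {m : ℕ}
    (hd : ∀ x, L (truncate n k m x) = L x) (j : Fin (2 * k + 1)) (A : Fin n)
    (x : Jbig n k) : pd n k L j A (truncate n k m x) = pd n k L j A x := by
  rw [pd, pd, fderiv_eq_comp_truncate hL hd (truncate n k m x),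
    fderiv_eq_comp_truncate hL hd x, truncate_truncate le_rfl]

def jetShift (v : Fin (2 * k + 1) → Fin n → ℝ) (i : Fin (2 * k + 1)) (A : Fin n) : ℝ :=
  if h : i.1 + 1 < 2 * k + 1 then v ⟨i.1 + 1, h⟩ A else 0

lemma clm_apply_eq_sum (φ : Jbig n k →L[ℝ] ℝ) (a : ℝ) (v : Fin (2 * k + 1) → Fin n → ℝ) :
    φ (a, v) = a * φ ((1 : ℝ), 0) +
      ∑ i : Fin (2 * k + 1), ∑ A : Fin n,
        v i A * φ ((0 : ℝ), Pi.single i (Pi.single A (1 : ℝ))) := by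
  have hv : ((a, v) : Jbig n k) = a • ((1 : ℝ), 0) +
      ∑ i : Fin (2 * k + 1), ∑ A : Fin n,
        v i A • ((0 : ℝ), Pi.single i (Pi.single A (1 : ℝ))) := by
    ext i A <;> simp [Prod.fst_sum, Prod.snd_sum, Finset.sum_apply, Pi.single_apply]
  rw [hv, map_add, map_smul, map_sum]
  simp only [map_sum, map_smul, smul_eq_mul]

lemma dT_eq_fderiv (f : Jbig n k → ℝ) (x : Jbig n k) :
    dT n k f x = fderiv ℝ f x ((1 : ℝ), jetShift x.2) := by
  rw [clm_apply_eq_sum, one_mul, dT]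
  rfl

lemma dT_truncate {f : Jbig n k → ℝ} (hf : Differentiable ℝ f) {m : ℕ}
    (hd : ∀ x, f (truncate n k m x) = f x) (x : Jbig n k) :
    dT n k f (truncate n k (m + 1) x) = dT n k f x := by
  rw [dT_eq_fderiv, dT_eq_fderiv, fderiv_eq_comp_truncate hf hd,
    fderiv_eq_comp_truncate hf hd x, truncate_truncate (Nat.le_succ m)]
  simp only [ContinuousLinearMap.comp_apply]
  congr 1
  ext i A <;> simp only [truncate_apply, ite_apply, Pi.zero_apply, jetShift]
  split_ifs <;> first | rfl | omega

lemma contDiff_jetShift :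
    ContDiff ℝ ∞ fun x : Jbig n k => jetShift x.2 := by
  refine contDiff_pi.2 fun i => contDiff_pi.2 fun A => ?_
  unfold jetShift
  split_ifs
  · exact contDiff_apply _ _ A |>.comp (contDiff_apply _ _ _ |>.comp contDiff_snd)
  · exact contDiff_const

lemma contDiff_dT {f : Jbig n k → ℝ} (hf : ContDiff ℝ ∞ f) : ContDiff ℝ ∞ (dT n k f) := by
  rw [funext (dT_eq_fderiv f)]
  exact (hf.fderiv_right (m := ∞) (by simp)).clm_apply
    (contDiff_const.prodMk contDiff_jetShift)

lemma iterate_dT_truncate {f : Jbig n k → ℝ} (hf : ContDiff ℝ ∞ f) {m : ℕ}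
    (hd : ∀ x, f (truncate n k m x) = f x) (i : ℕ) (x : Jbig n k) :
    (dT n k)^[i] f (truncate n k (m + i) x) = (dT n k)^[i] f x := by
  induction i generalizing f m with
  | zero => exact hd x
  | succ i ih =>
    rw [Function.iterate_succ_apply, ← add_assoc, add_right_comm]
    exact ih (contDiff_dT hf) (dT_truncate (hf.differentiable (by simp)) hd)

end JetSpace

section Curves

variable {n k : ℕ}

lemma hasDerivAt_comp_dT {f : Jbig n k → ℝ} (hf : Differentiable ℝ f) {m : ℕ}
    (hd : ∀ x, f (truncate n k m x) = f x) {Q : ℝ → Fin (2 * k + 1) → Fin n → ℝ}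
    {Q' : Fin (2 * k + 1) → Fin n → ℝ} {t : ℝ} (hQ : HasDerivAt Q Q' t)
    (hQ' : ∀ i : Fin (2 * k + 1), i.1 ≤ m → Q' i = jetShift (Q t) i) :
    HasDerivAt (fun s => f (s, Q s)) (dT n k f (t, Q t)) t := by
  have hγ : HasDerivAt (fun s => ((s, Q s) : Jbig n k)) ((1 : ℝ), Q') t :=
    (hasDerivAt_id t).prodMk hQ
  refine ((hf _).hasFDerivAt.comp_hasDerivAt t hγ).congr_deriv ?_
  rw [dT_eq_fderiv, fderiv_eq_comp_truncate hf hd, ContinuousLinearMap.comp_apply,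
    ContinuousLinearMap.comp_apply]
  congr 1
  ext i A <;> simp only [truncate_apply]
  split_ifs with hi
  · rw [hQ' i hi]
  · rfl

variable (hk : 1 ≤ k) (qc : ℝ → Fin (2 * k) → Fin n → ℝ)

lemma hasDerivAt_jetC_snd (hq0 : ∀ A, ContDiff ℝ ∞ fun t => qc t ⟨0, by omega⟩ A) (t : ℝ) :
    HasDerivAt (fun s => (jetC n k hk qc s).2)
      (fun i A => iteratedDeriv (i.1 + 1) (fun s => qc s ⟨0, by omega⟩ A) t) t :=
  hasDerivAt_pi.2 fun i => hasDerivAt_pi.2 fun A => (hq0 A).hasDerivAt_iteratedDeriv i.1 t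

lemma hasDerivAt_comp_jetC (hq0 : ∀ A, ContDiff ℝ ∞ fun t => qc t ⟨0, by omega⟩ A)
    {f : Jbig n k → ℝ} (hf : Differentiable ℝ f) {m : ℕ} (hm : m < 2 * k)
    (hd : ∀ x, f (truncate n k m x) = f x) (t : ℝ) :
    HasDerivAt (fun s => f (jetC n k hk qc s)) (dT n k f (jetC n k hk qc t)) t :=
  hasDerivAt_comp_dT hf hd (hasDerivAt_jetC_snd hk qc hq0 t) fun i hi => by
    ext A
    simp [jetShift, show i.1 + 1 < 2 * k + 1 by omega]

lemma iterate_dT_jetC (hq0 : ∀ A, ContDiff ℝ ∞ fun t => qc t ⟨0, by omega⟩ A)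
    {f : Jbig n k → ℝ} (hf : ContDiff ℝ ∞ f) {m : ℕ} (hd : ∀ x, f (truncate n k m x) = f x)
    (i : ℕ) (hi : m + i ≤ 2 * k) (t : ℝ) :
    (dT n k)^[i] f (jetC n k hk qc t) = iteratedDeriv i (fun s => f (jetC n k hk qc s)) t := by
  induction i generalizing f m with
  | zero => rfl
  | succ i ih =>
    have hdiff := hf.differentiable (by simp)
    rw [Function.iterate_succ_apply, ih (contDiff_dT hf) (dT_truncate hdiff hd) (by omega),
      iteratedDeriv_succ']
    congr 1
    funext s
    exact ((hasDerivAt_comp_jetC hk qc hq0 hdiff (by omega) hd s).deriv).symm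

lemma truncate_iotaC_eq_truncate_jetC
    (hol : ∀ (t : ℝ) (i : Fin (2 * k)) (A : Fin n),
      qc t i A = iteratedDeriv i (fun s => qc s ⟨0, by omega⟩ A) t)
    {m : ℕ} (hm : m < 2 * k) (t : ℝ) :
    truncate n k m (iotaC n k qc t) = truncate n k m (jetC n k hk qc t) := by
  refine Prod.ext rfl (funext fun i => ?_)
  simp only [truncate_apply]
  split_ifs with hi
  · ext A
    exact (dif_pos (show i.1 < 2 * k by omega)).trans (hol t ⟨i.1, _⟩ A)
  · rfl

end Curves

section Lagrangian

variable {n k : ℕ}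

lemma contDiff_pd {L : Jbig n k → ℝ} (hL : ContDiff ℝ ∞ L) (j : Fin (2 * k + 1)) (A : Fin n) :
    ContDiff ℝ ∞ (pd n k L j A) :=
  (hL.fderiv_right (m := ∞) (by simp)).clm_apply contDiff_const

lemma contDiff_jetC (hk : 1 ≤ k) {qc : ℝ → Fin (2 * k) → Fin n → ℝ}
    (hq0 : ∀ A, ContDiff ℝ ∞ fun t => qc t ⟨0, by omega⟩ A) :
    ContDiff ℝ ∞ (jetC n k hk qc) :=
  contDiff_id.prodMk <| contDiff_pi.2 fun i => contDiff_pi.2 fun A => (hq0 A).iteratedDeriv i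

-- `∂L/∂q_j^A` along the jet prolongation, indexed by `j : ℕ` (and zero for `j > 2k`) so that the
-- index arithmetic of the momentum sums stays in `ℕ`.
variable (n k) in
noncomputable def pdJet (L : Jbig n k → ℝ) (hk : 1 ≤ k) (qc : ℝ → Fin (2 * k) → Fin n → ℝ)
    (A : Fin n) (j : ℕ) (t : ℝ) : ℝ :=
  if h : j < 2 * k + 1 then pd n k L ⟨j, h⟩ A (jetC n k hk qc t) else 0

variable {L : Jbig n k → ℝ} {hk : 1 ≤ k} {qc : ℝ → Fin (2 * k) → Fin n → ℝ}

lemma pdJet_of_lt {A : Fin n} {j : ℕ} (h : j < 2 * k + 1) :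
    pdJet n k L hk qc A j = fun t => pd n k L ⟨j, h⟩ A (jetC n k hk qc t) :=
  funext fun _ => dif_pos h

lemma contDiff_pdJet (hL : ContDiff ℝ ∞ L)
    (hq0 : ∀ A, ContDiff ℝ ∞ fun t => qc t ⟨0, by omega⟩ A) (A : Fin n) (j : ℕ) :
    ContDiff ℝ ∞ (pdJet n k L hk qc A j) := by
  by_cases h : j < 2 * k + 1
  · rw [pdJet_of_lt h]
    exact (contDiff_pd hL _ A).comp (contDiff_jetC hk hq0)
  · rw [show pdJet n k L hk qc A j = fun _ => 0 from funext fun _ => dif_neg h]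
    exact contDiff_const

lemma ostrogradskySum_pdJet (A : Fin n) {a m : ℕ} (h : a + m ≤ 2 * k + 1) (t : ℝ) :
    ostrogradskySum (pdJet n k L hk qc A) a m t =
      ∑ i : Fin m, (-1 : ℝ) ^ (i : ℕ) *
        iteratedDeriv i (fun s => pd n k L ⟨a + i, by omega⟩ A (jetC n k hk qc s)) t := by
  rw [ostrogradskySum, ← Fin.sum_univ_eq_sum_range]
  refine Finset.sum_congr rfl fun i _ => ?_
  rw [pdJet_of_lt]

lemma iterate_dT_pd_iotaC (hL : ContDiff ℝ ∞ L) (hLk : ∀ x, L (truncate n k k x) = L x)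
    (hq0 : ∀ A, ContDiff ℝ ∞ fun t => qc t ⟨0, by omega⟩ A)
    (hol : ∀ (t : ℝ) (i : Fin (2 * k)) (A : Fin n),
      qc t i A = iteratedDeriv i (fun s => qc s ⟨0, by omega⟩ A) t)
    (j : Fin (2 * k + 1)) (A : Fin n) {i : ℕ} (hi : k + i < 2 * k) (t : ℝ) :
    (dT n k)^[i] (pd n k L j A) (iotaC n k qc t) =
      iteratedDeriv i (fun s => pd n k L j A (jetC n k hk qc s)) t := by
  have hpd := pd_truncate (hL.differentiable (by simp)) hLk j A
  have hdep := iterate_dT_truncate (contDiff_pd hL j A) hpd i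
  rw [← hdep, truncate_iotaC_eq_truncate_jetC hk qc hol hi, hdep,
    iterate_dT_jetC hk qc hq0 (contDiff_pd hL j A) hpd i hi.le]

end Lagrangian

/-- **Equivalence of the two characterizations of the unified dynamics.** -/
theorem unified_system_iff_EL_and_ostrogradsky (hk : 1 ≤ k)
    (L : Jbig n k → ℝ) (hL : ContDiff ℝ (⊤ : ℕ∞) L)
    (hdep : ∀ x y : Jbig n k, x.1 = y.1 →
      (∀ i : Fin (2 * k + 1), i.1 ≤ k → x.2 i = y.2 i) → L x = L y)
    (qc : ℝ → Fin (2 * k) → Fin n → ℝ) (pc : ℝ → Fin k → Fin n → ℝ)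
    (hqc : ∀ (l : Fin (2 * k)) (A : Fin n), ContDiff ℝ (⊤ : ℕ∞) fun t => qc t l A) :
    -- the unified system on the Legendre–Ostrogradsky submanifold,
    -- together with the Euler–Lagrange equation …
    (((∀ (t : ℝ) (l : ℕ) (h1 : l + 1 < 2 * k) (A : Fin n),
        HasDerivAt (fun s => qc s ⟨l, by omega⟩ A) (qc t ⟨l + 1, h1⟩ A) t) ∧
      (∀ (t : ℝ) (A : Fin n),
        HasDerivAt (fun s => pc s ⟨0, by omega⟩ A)
          (pd n k L ⟨0, by omega⟩ A (iotaC n k qc t)) t) ∧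
      (∀ (t : ℝ) (i : ℕ) (h1 : 1 ≤ i) (h2 : i < k) (A : Fin n),
        HasDerivAt (fun s => pc s ⟨i, h2⟩ A)
          (pd n k L ⟨i, by omega⟩ A (iotaC n k qc t) -
            pc t ⟨i - 1, by omega⟩ A) t) ∧
      (∀ (t : ℝ) (ri : Fin k) (A : Fin n),
        pc t ri A = ∑ i : Fin (k - ri.1), (-1 : ℝ) ^ (i : ℕ) *
          (dT n k)^[i] (pd n k L
            ⟨ri.1 + 1 + i.1, by have := i.isLt; have := ri.isLt; omega⟩ A)
            (iotaC n k qc t)) ∧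
      (∀ (t : ℝ) (A : Fin n),
        ∑ i : Fin (k + 1), (-1 : ℝ) ^ (i : ℕ) *
          iteratedDeriv i.1
            (fun s => pd n k L ⟨i.1, by have := i.isLt; omega⟩ A
              (jetC n k hk qc s)) t = 0))
    ↔
    -- … is equivalent to: EL for `q_0`, holonomy, and the Ostrogradsky
    -- momentum formulas:
    ((∀ (t : ℝ) (A : Fin n),
        ∑ i : Fin (k + 1), (-1 : ℝ) ^ (i : ℕ) *
          iteratedDeriv i.1
            (fun s => pd n k L ⟨i.1, by have := i.isLt; omega⟩ A
              (jetC n k hk qc s)) t = 0) ∧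
     (∀ (t : ℝ) (i : ℕ) (h : i < 2 * k) (A : Fin n),
        qc t ⟨i, h⟩ A = iteratedDeriv i (fun s => qc s ⟨0, by omega⟩ A) t) ∧
     (∀ (t : ℝ) (ri : Fin k) (A : Fin n),
        pc t ri A = ∑ i : Fin (k - ri.1), (-1 : ℝ) ^ (i : ℕ) *
          iteratedDeriv i.1
            (fun s => pd n k L
              ⟨ri.1 + 1 + i.1, by have := i.isLt; have := ri.isLt; omega⟩ A
              (jetC n k hk qc s)) t))) := by
  have hq0 : ∀ A, ContDiff ℝ ∞ fun t => qc t ⟨0, by omega⟩ A := fun A => hqc _ A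
  have hLk : ∀ x, L (truncate n k k x) = L x := fun x =>
    hdep _ _ rfl fun i hi => by simp [truncate_apply, hi]
  have hiota := fun (hol : ∀ (t : ℝ) (i : ℕ) (h : i < 2 * k) (A : Fin n),
      qc t ⟨i, h⟩ A = iteratedDeriv i (fun s => qc s ⟨0, by omega⟩ A) t) =>
    iterate_dT_pd_iotaC (hk := hk) hL hLk hq0 fun t i A => hol t i i.2 A
  constructor
  · rintro ⟨hq, -, -, hp, hEL⟩
    have hol := (hasDerivAt_succ_iff_eq_iteratedDeriv (by omega) qc hq0).1 hq
    refine ⟨hEL, hol, fun t r A => (hp t r A).trans (Finset.sum_congr rfl fun i _ => ?_)⟩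
    rw [hiota hol _ A (i := i) (by have := i.2; omega) t]
  · rintro ⟨hEL, hol, hp⟩
    have hval : ∀ t j (hj : j ≤ k) A,
        pd n k L ⟨j, by omega⟩ A (iotaC n k qc t) = pdJet n k L hk qc A j t := fun t j hj A => by
      rw [pdJet_of_lt (by omega)]
      exact hiota hol _ A (i := 0) (by omega) t
    have hodes := fun A => hasDerivAt_momenta_of_eq_ostrogradskySum
      (contDiff_pdJet (hk := hk) hL hq0 A) (p := fun t r => pc t r A)
      (fun t r hr => by rw [ostrogradskySum_pdJet A (by omega)]; exact hp t ⟨r, hr⟩ A)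
      (fun t => by rw [ostrogradskySum_pdJet A (by omega)]; simpa only [zero_add] using hEL t A)
    refine ⟨(hasDerivAt_succ_iff_eq_iteratedDeriv (by omega) qc hq0).2 hol,
      fun t A => ?_, fun t i hi hik A => ?_,
      fun t r A => (hp t r A).trans (Finset.sum_congr rfl fun i _ => ?_), hEL⟩
    · rw [hval t 0 (Nat.zero_le k)]
      exact (hodes A t).1 (by omega)
    · obtain ⟨r, rfl⟩ : ∃ r, i = r + 1 := ⟨i - 1, by omega⟩
      rw [hval t _ hik.le]
      exact (hodes A t).2 r hik
    · rw [hiota hol _ A (i := i) (by have := i.2; omega) t]
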